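/- arXiv:2201.01351 — 4 statements merged into one kernel-verified Lean document; each statement's English description precedes it below -/
import Mathlib

section
/- For every integer n ≥ 1 and every real t, S_n(1,1;t) = ∏_{k=1}^{n} ( t + 1/(2 + 2·cos(2kπ/(2n+1))) ), where S_n(1,1;t) is defined by the recurrence S_0 = 1, S_1 = t + 1, S_m = (1+2t)·S_{m-1} − t²·S_{m-2}. -/
open Real

/-- The sequence `Sₙ(a,b;t)`: `S₀ = 1`, `S₁ = a·t + b`,
`Sₙ = (1+2t)·Sₙ₋₁ − t²·Sₙ₋₂`. -/
def S (a b t : ℝ) : ℕ → ℝ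
  | 0 => 1
  | 1 => a * t + b
  | n + 2 => (1 + 2 * t) * S a b t (n + 1) - t ^ 2 * S a b t n

/-! Put `c = 4 cos² θ`. At `t = -1/c` the recurrence for `Sₙ cⁿ` becomes `uₙ₊₂ = (c - 2) uₙ₊₁ - uₙ`,
which `sin ((2n+1)θ)` also satisfies because `c - 2 = 2 cos 2θ`; comparing initial values,
`Sₙ(1,1;-1/c) · cⁿ · sin θ = sin ((2n+1)θ)`. So the angles `θ = kπ/(2n+1)`, `1 ≤ k ≤ n`, yield `n`
distinct roots `-1/(4 cos² θ) = -1/(2 + 2 cos 2θ)` of `Sₙ(1,1;·)`, a monic polynomial of degree `n`,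
which is therefore the product of the corresponding linear factors. -/

open Polynomial Finset

noncomputable def SPoly (a b : ℝ) : ℕ → ℝ[X]
  | 0 => 1
  | 1 => C a * X + C b
  | n + 2 => (1 + 2 * X) * SPoly a b (n + 1) - X ^ 2 * SPoly a b n

theorem eval_SPoly (a b t : ℝ) : ∀ n, (SPoly a b n).eval t = S a b t n
  | 0 => by simp [SPoly, S]
  | 1 => by simp [SPoly, S]
  | n + 2 => by simp [SPoly, S, eval_SPoly a b t n, eval_SPoly a b t (n + 1)]

theorem natDegree_SPoly_le (a b : ℝ) : ∀ n, (SPoly a b n).natDegree ≤ n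
  | 0 => by simp [SPoly]
  | 1 => by simp only [SPoly]; compute_degree
  | n + 2 => by
    have h₁ := natDegree_SPoly_le a b (n + 1)
    have h₂ := natDegree_SPoly_le a b n
    simp only [SPoly]
    compute_degree; omega

theorem coeff_SPoly_self (a b : ℝ) : ∀ n : ℕ, (SPoly a b n).coeff n = 1 + n * (a - 1)
  | 0 => by simp [SPoly]
  | 1 => by simp [SPoly]
  | n + 2 => by
    have hvanish : (SPoly a b (n + 1)).coeff (n + 2) = 0 :=
      coeff_eq_zero_of_natDegree_lt ((natDegree_SPoly_le a b (n + 1)).trans_lt (by omega))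
    have h₁ := coeff_SPoly_self a b (n + 1)
    have h₂ := coeff_SPoly_self a b n
    simp only [SPoly, coeff_sub, add_mul, one_mul, coeff_add, mul_assoc, coeff_X_mul,
      coeff_ofNat_mul, coeff_X_pow_mul', hvanish, h₁]
    rw [if_pos (by omega), Nat.add_sub_cancel, h₂]
    push_cast
    ring

theorem monic_SPoly_one (b : ℝ) (n : ℕ) : (SPoly 1 b n).Monic :=
  monic_of_natDegree_le_of_coeff_eq_one n (natDegree_SPoly_le 1 b n) (by simp [coeff_SPoly_self])

theorem natDegree_SPoly_one (b : ℝ) (n : ℕ) : (SPoly 1 b n).natDegree = n :=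
  natDegree_eq_of_le_of_coeff_ne_zero (natDegree_SPoly_le 1 b n) (by simp [coeff_SPoly_self])

theorem S_neg_one_div_mul_pow_add_two (a b : ℝ) {c : ℝ} (hc : c ≠ 0) (n : ℕ) :
    S a b (-1 / c) (n + 2) * c ^ (n + 2) =
      (c - 2) * (S a b (-1 / c) (n + 1) * c ^ (n + 1)) - S a b (-1 / c) n * c ^ n := by
  simp only [S]
  field_simp
  ring

theorem S_one_one_mul_sin {θ : ℝ} (hθ : cos θ ≠ 0) :
    ∀ n : ℕ, S 1 1 (-1 / (4 * cos θ ^ 2)) n * (4 * cos θ ^ 2) ^ n * sin θ =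
      sin ((2 * n + 1) * θ)
  | 0 => by simp [S]
  | 1 => by
    simp only [S]
    push_cast
    rw [show (2 : ℝ) * 1 + 1 = 3 by norm_num, sin_three_mul]
    field_simp
    linear_combination (4 * sin θ) * sin_sq_add_cos_sq θ
  | n + 2 => by
    have hc : 4 * cos θ ^ 2 ≠ 0 := by positivity
    have h₁ := S_one_one_mul_sin hθ n
    have h₂ := S_one_one_mul_sin hθ (n + 1)
    have htrig : sin ((2 * ((n + 2 : ℕ) : ℝ) + 1) * θ) =
        (4 * cos θ ^ 2 - 2) * sin ((2 * ((n + 1 : ℕ) : ℝ) + 1) * θ) - sin ((2 * n + 1) * θ) := by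
      have e₁ : (2 * ((n + 2 : ℕ) : ℝ) + 1) * θ = (2 * ((n + 1 : ℕ) : ℝ) + 1) * θ + 2 * θ := by
        push_cast; ring
      have e₂ : (2 * (n : ℝ) + 1) * θ = (2 * ((n + 1 : ℕ) : ℝ) + 1) * θ - 2 * θ := by
        push_cast; ring
      rw [e₁, e₂, sin_add, sin_sub, cos_two_mul]
      ring
    rw [S_neg_one_div_mul_pow_add_two 1 1 hc, htrig, ← h₁, ← h₂]
    ring

theorem S_one_one_eq_zero_of_sin_eq_zero {θ : ℝ} (hc : cos θ ≠ 0) (hs : sin θ ≠ 0) {n : ℕ}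
    (h : sin ((2 * n + 1) * θ) = 0) : S 1 1 (-1 / (4 * cos θ ^ 2)) n = 0 := by
  rw [← S_one_one_mul_sin hc] at h
  simpa [hc, hs] using h

theorem injOn_neg_one_div_four_mul_cos_sq :
    Set.InjOn (fun θ => -1 / (4 * cos θ ^ 2)) (Set.Ioo 0 (π / 2)) := by
  intro x hx y hy hxy
  have hcx : 0 < cos x := cos_pos_of_mem_Ioo ⟨by linarith [hx.1, pi_pos], hx.2⟩
  have hcy : 0 < cos y := cos_pos_of_mem_Ioo ⟨by linarith [hy.1, pi_pos], hy.2⟩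
  have hsq : cos x ^ 2 = cos y ^ 2 := by
    field_simp at hxy
    linarith
  refine injOn_cos ⟨hx.1.le, by linarith [hx.2, pi_pos]⟩ ⟨hy.1.le, by linarith [hy.2, pi_pos]⟩ ?_
  exact (pow_left_inj₀ hcx.le hcy.le two_ne_zero).mp hsq

theorem Polynomial.Monic.eq_prod_X_sub_C_of_isRoot {R ι : Type*} [CommRing R] [IsDomain R]
    {p : R[X]} (hp : p.Monic) {s : Finset ι} {v : ι → R} (hdeg : p.natDegree = #s)
    (hv : Set.InjOn v s) (hroot : ∀ i ∈ s, p.IsRoot (v i)) : p = ∏ i ∈ s, (X - C (v i)) := by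
  have hq : (∏ i ∈ s, (X - C (v i))).Monic := monic_prod_X_sub_C v s
  have hqdeg : (∏ i ∈ s, (X - C (v i))).natDegree = #s := by
    rw [natDegree_prod_of_monic _ _ fun i _ => monic_X_sub_C (v i)]
    simp
  refine eq_of_degree_le_of_eval_index_eq s hv ?_ ?_ ?_ ?_
  · rw [degree_eq_natDegree hp.ne_zero, hdeg]
  · rw [degree_eq_natDegree hp.ne_zero, degree_eq_natDegree hq.ne_zero, hdeg, hqdeg]
  · rw [hp.leadingCoeff, hq.leadingCoeff]
  · intro i hi
    rw [(hroot i hi).eq_zero, eval_prod, prod_eq_zero hi (by simp)]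

theorem nat_mul_pi_div_mem_Ioo {n k : ℕ} (hk : k ∈ Icc 1 n) :
    k * π / (2 * n + 1) ∈ Set.Ioo 0 (π / 2) := by
  obtain ⟨hk₁, hk₂⟩ := mem_Icc.mp hk
  have hk₁' : (1 : ℝ) ≤ k := by exact_mod_cast hk₁
  have hk₂' : (k : ℝ) ≤ n := by exact_mod_cast hk₂
  constructor
  · positivity
  · rw [div_lt_iff₀ (by positivity)]
    nlinarith [pi_pos]

theorem injective_nat_mul_pi_div (n : ℕ) :
    Function.Injective fun k : ℕ => k * π / (2 * n + 1) := by
  intro k j h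
  have : (k : ℝ) = j := by
    simpa [pi_ne_zero, (by positivity : (2 * n + 1 : ℝ) ≠ 0)] using h
  exact_mod_cast this

theorem isRoot_SPoly_one_one {n k : ℕ} (hk : k ∈ Icc 1 n) :
    (SPoly 1 1 n).IsRoot (-1 / (4 * cos (k * π / (2 * n + 1)) ^ 2)) := by
  obtain ⟨h₀, hπ⟩ := nat_mul_pi_div_mem_Ioo hk
  rw [IsRoot, eval_SPoly]
  refine S_one_one_eq_zero_of_sin_eq_zero (cos_pos_of_mem_Ioo ⟨by linarith, hπ⟩).ne'
    (sin_pos_of_pos_of_lt_pi h₀ (by linarith)).ne' ?_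
  rw [show (2 * n + 1 : ℝ) * (k * π / (2 * n + 1)) = k * π by field_simp]
  exact sin_nat_mul_pi k

theorem S_one_one_roots_general (n : ℕ) (t : ℝ) :
    S 1 1 t n =
      ∏ k ∈ Finset.Icc 1 n,
        (t + 1 / (2 + 2 * Real.cos (2 * (k : ℝ) * π / (2 * n + 1)))) := by
  set θ : ℕ → ℝ := fun k => k * π / (2 * n + 1)
  have hθ : Set.MapsTo θ (Icc 1 n) (Set.Ioo 0 (π / 2)) := fun k hk => nat_mul_pi_div_mem_Ioo hk
  have hprod := (monic_SPoly_one 1 n).eq_prod_X_sub_C_of_isRoot (by simp [natDegree_SPoly_one])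
    (injOn_neg_one_div_four_mul_cos_sq.comp (injective_nat_mul_pi_div n).injOn hθ)
    fun k hk => isRoot_SPoly_one_one hk
  rw [← eval_SPoly, hprod, eval_prod]
  refine prod_congr rfl fun k _ => ?_
  have hcos : 4 * cos (θ k) ^ 2 = 2 + 2 * cos (2 * k * π / (2 * n + 1)) := by
    rw [cos_sq]; simp only [θ]; ring_nf
  simp only [Function.comp_apply, eval_sub, eval_X, eval_C]
  rw [hcos]
  ring

/-- `Sₙ(1,1;t) = ∏_{k=1}^{n} (t + 1/(2 + 2 cos(2kπ/(2n+1))))`. -/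
theorem S_one_one_roots (n : ℕ) (hn : 1 ≤ n) (t : ℝ) :
    S 1 1 t n =
      ∏ k ∈ Finset.Icc 1 n,
        (t + 1 / (2 + 2 * Real.cos (2 * (k : ℝ) * π / (2 * n + 1)))) :=
  S_one_one_roots_general n t
end

section
/- For every integer n ≥ 1 and every real t, (1/(2n+1))·S_n(3,1;t) = ∏_{k=1}^{n} ( t + 1/(2 + 2·cos((2k−1)π/(2n+1))) ), where S_n(3,1;t) is defined by the recurrence S_0 = 1, S_1 = 3t + 1, S_m = (1+2t)·S_{m-1} − t²·S_{m-2}. -/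
/-!
Substituting `t = v ^ 2 + v` (with `v` complex) turns the recurrence into
`Sₙ(3,1;t) = (v + 1) ^ (2n+1) - v ^ (2n+1)`. Factoring `x ^ (2n+1) - y ^ (2n+1)` over the
`(2n+1)`-th roots of unity and pairing the conjugate roots `-e^{±iθₖ}`, `θₖ = (2k-1)π/(2n+1)`,
gives `(x - y) ∏ₖ (x² + 2 cos θₖ x y + y²)`; at `x = v + 1`, `y = v` the `k`-th factor is
`1 + (2 + 2 cos θₖ) t`. Dividing by `x - y` and letting `x → y = 1` shows that the numbers
`2 + 2 cos θₖ` multiply to `2n+1`.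
-/

open Real

open Finset

theorem Finset.prod_Icc_one_eq_prod_range {M : Type*} [CommMonoid M] (f : ℕ → M) (n : ℕ) :
    ∏ k ∈ Icc 1 n, f k = ∏ i ∈ range n, f (i + 1) := by
  rw [range_eq_Ico, prod_Ico_add', zero_add, Ico_add_one_right_eq_Icc]

theorem Finset.prod_range_two_mul_add_one_eq_mul_prod_pairs {M : Type*} [CommMonoid M]
    (f : ℕ → M) (n : ℕ) :
    ∏ i ∈ range (2 * n + 1), f i = f 0 * ∏ k ∈ Icc 1 n, f (n + 1 - k) * f (n + k) := by
  have hlow : ∏ i ∈ range n, f (i + 1) = ∏ i ∈ range n, f (n - i) := by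
    rw [← prod_range_reflect]
    exact prod_congr rfl fun i hi => by rw [mem_range] at hi; congr 1; omega
  rw [prod_range_succ', two_mul, prod_range_add, hlow, ← prod_mul_distrib, mul_comm,
    prod_Icc_one_eq_prod_range]
  simp only [Nat.add_sub_add_right, add_assoc]

theorem IsPrimitiveRoot.pow_sub_pow_eq_prod_range {R : Type*} [CommRing R] [IsDomain R] {ζ : R}
    {N : ℕ} (hN : 0 < N) (h : IsPrimitiveRoot ζ N) (x y : R) :
    x ^ N - y ^ N = ∏ i ∈ range N, (x - ζ ^ i * y) := by
  classical
  have himage : Polynomial.nthRootsFinset N (1 : R) = (range N).image (ζ ^ ·) := by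
    simp [Polynomial.nthRootsFinset, h.nthRoots_eq (one_pow N), Finset.image]
  rw [h.pow_sub_pow_eq_prod_sub_mul x y hN, himage, prod_image h.injOn_pow]

theorem Complex.exp_two_pi_mul_I_div_pow_eq_neg_exp {N m : ℕ} {θ : ℝ}
    (h : 2 * π * m / N = θ + π) :
    exp (2 * π * I / N) ^ m = -exp (θ * I) := by
  have hC : (2 * π * m / N : ℂ) = θ + π := by exact_mod_cast h
  have harg : (m : ℂ) * (2 * π * I / N) = θ * I + π * I := by
    linear_combination I * hC
  rw [← exp_nat_mul, harg, exp_add, exp_pi_mul_I, mul_neg_one]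

theorem Complex.add_exp_neg_mul_I_mul_add_exp_mul_I (x y : ℂ) (θ : ℝ) :
    (x + exp (-θ * I) * y) * (x + exp (θ * I) * y) = x ^ 2 + 2 * Real.cos θ * x * y + y ^ 2 := by
  have hinv : exp (-θ * I) * exp (θ * I) = 1 := by
    rw [← exp_add, neg_mul, neg_add_cancel, exp_zero]
  rw [ofReal_cos, two_cos]
  linear_combination y ^ 2 * hinv

theorem pow_sub_pow_eq_sub_mul_prod_cos (n : ℕ) (x y : ℂ) :
    x ^ (2 * n + 1) - y ^ (2 * n + 1) =
      (x - y) * ∏ k ∈ Icc 1 n,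
        (x ^ 2 + 2 * Real.cos ((2 * k - 1) * π / (2 * n + 1)) * x * y + y ^ 2) := by
  have hζ := Complex.isPrimitiveRoot_exp (2 * n + 1) (by omega)
  rw [hζ.pow_sub_pow_eq_prod_range (by omega), prod_range_two_mul_add_one_eq_mul_prod_pairs,
    pow_zero, one_mul]
  congr 1
  refine prod_congr rfl fun k hk => ?_
  have hkn : k ≤ n + 1 := by simp only [mem_Icc] at hk; omega
  rw [Complex.exp_two_pi_mul_I_div_pow_eq_neg_exp (θ := -((2 * k - 1) * π / (2 * n + 1))),
    Complex.exp_two_pi_mul_I_div_pow_eq_neg_exp (θ := (2 * k - 1) * π / (2 * n + 1)),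
    ← Complex.add_exp_neg_mul_I_mul_add_exp_mul_I]
  · push_cast; ring
  · push_cast; field_simp; ring
  · push_cast [Nat.cast_sub hkn]; field_simp; ring

theorem geom_sum_eq_prod_cos (n : ℕ) (x : ℂ) :
    ∑ i ∈ range (2 * n + 1), x ^ i =
      ∏ k ∈ Icc 1 n, (x ^ 2 + 2 * Real.cos ((2 * k - 1) * π / (2 * n + 1)) * x + 1) := by
  -- Cancel `x - 1` where it is nonzero; continuity covers `x = 1`.
  refine congrFun (Continuous.ext_on (dense_compl_singleton 1)
    (f := fun x : ℂ => ∑ i ∈ range (2 * n + 1), x ^ i)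
    (g := fun x : ℂ => ∏ k ∈ Icc 1 n, (x ^ 2 + 2 * Real.cos ((2 * k - 1) * π / (2 * n + 1)) * x + 1))
    (by fun_prop) (by fun_prop) fun x (hx : x ≠ 1) => mul_right_cancel₀ (sub_ne_zero.2 hx) ?_) x
  have h := pow_sub_pow_eq_sub_mul_prod_cos n x 1
  simp only [one_pow, mul_one] at h
  rw [geom_sum_mul, h, mul_comm]

theorem prod_two_add_two_cos (n : ℕ) :
    ∏ k ∈ Icc 1 n, (2 + 2 * Real.cos ((2 * k - 1) * π / (2 * n + 1))) = 2 * n + 1 := by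
  have h := geom_sum_eq_prod_cos n 1
  simp only [one_pow, sum_const, card_range, nsmul_eq_mul, mul_one] at h
  apply Complex.ofReal_injective
  push_cast at h ⊢
  exact (prod_congr rfl fun k _ => by ring).trans h.symm

theorem S_three_one_eq_pow_sub_pow {t : ℝ} {v : ℂ} (hv : v ^ 2 + v = t) (m : ℕ) :
    (S 3 1 t m : ℂ) = (v + 1) ^ (2 * m + 1) - v ^ (2 * m + 1) := by
  induction m using S.induct with
  | case1 => simp [S]
  | case2 => simp only [S]; push_cast; linear_combination (-3) * hv
  | case3 m ih₁ ih₀ => simp only [S, Nat.succ_eq_add_one]; push_cast; rw [ih₁, ih₀, ← hv]; ring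

theorem S_three_one_eq_prod (n : ℕ) (t : ℝ) :
    S 3 1 t n = ∏ k ∈ Icc 1 n, (1 + (2 + 2 * Real.cos ((2 * k - 1) * π / (2 * n + 1))) * t) := by
  obtain ⟨s, hs⟩ := IsAlgClosed.exists_pow_nat_eq (1 + 4 * (t : ℂ)) two_pos
  obtain ⟨v, hv⟩ : ∃ v : ℂ, v ^ 2 + v = t := ⟨(s - 1) / 2, by linear_combination hs / 4⟩
  apply Complex.ofReal_injective
  rw [S_three_one_eq_pow_sub_pow hv, pow_sub_pow_eq_sub_mul_prod_cos, add_sub_cancel_left, one_mul]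
  push_cast
  exact prod_congr rfl fun k _ => by
    linear_combination (2 + 2 * Complex.cos ((2 * k - 1) * π / (2 * n + 1))) * hv

theorem S_three_one_roots_general (n : ℕ) (t : ℝ) :
    (1 / (2 * n + 1 : ℝ)) * S 3 1 t n =
      ∏ k ∈ Finset.Icc 1 n,
        (t + 1 / (2 + 2 * Real.cos ((2 * (k : ℝ) - 1) * π / (2 * n + 1)))) := by
  have hprod := prod_two_add_two_cos n
  have hne := prod_ne_zero_iff.1 (hprod.trans_ne (by positivity))
  calc (1 / (2 * n + 1 : ℝ)) * S 3 1 t n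
      = (∏ k ∈ Icc 1 n, (1 + (2 + 2 * Real.cos ((2 * k - 1) * π / (2 * n + 1))) * t)) /
          ∏ k ∈ Icc 1 n, (2 + 2 * Real.cos ((2 * k - 1) * π / (2 * n + 1))) := by
        rw [S_three_one_eq_prod, hprod, one_div_mul_eq_div]
    _ = _ := by
        rw [← prod_div_distrib]
        exact prod_congr rfl fun k hk => by
          rw [add_div, mul_div_cancel_left₀ t (hne k hk), add_comm]

/-- `(1/(2n+1))·Sₙ(3,1;t) = ∏_{k=1}^{n} (t + 1/(2 + 2 cos((2k−1)π/(2n+1))))`. -/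
theorem S_three_one_roots (n : ℕ) (hn : 1 ≤ n) (t : ℝ) :
    (1 / (2 * n + 1 : ℝ)) * S 3 1 t n =
      ∏ k ∈ Finset.Icc 1 n,
        (t + 1 / (2 + 2 * Real.cos ((2 * (k : ℝ) - 1) * π / (2 * n + 1)))) :=
  S_three_one_roots_general n t
end

section
/- For every real s, every real t, and every integer n ≥ 1: S_n(1, s+1; t) = S_n(1,1;t) + s·S_{n-1}(2,1;t) = ∑_{k=0}^{n} C(2n−k, k)·t^k + s·∑_{k=0}^{n-1} C(2n−1−k, k)·t^k. Moreover, at t = -1/4 one has S_n(1, s+1; -1/4) = (4ns + 2n + 1)/4^n. -/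
/-!
Every identity reduces to the uniqueness of solutions of the linear recurrence with given initial
values. The difference `Sₙ(a+d, b+c) − Sₙ(a, b)` solves it with initial values `0, d·t + c`, as does
`(d·t + c)·Sₙ₋₁(2,1)`, since `S(2,1)` is the solution extended by `S₋₁ = 0`. The diagonal binomial
sums `Fₘ(t) = ∑ C(m−k,k) tᵏ` satisfy `Fₘ₊₂ = Fₘ₊₁ + t·Fₘ`, hence `Fₘ₊₄ = (1+2t)·Fₘ₊₂ − t²·Fₘ`, so
their even and odd subsequences solve the recurrence too. At `t = −1/4` the characteristic
polynomial is `(x − 1/4)²`, giving the closed form.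
-/

open Finset

theorem S_eq_of_recurrence {a b t : ℝ} {f : ℕ → ℝ} (h₀ : f 0 = 1) (h₁ : f 1 = a * t + b)
    (hrec : ∀ n, f (n + 2) = (1 + 2 * t) * f (n + 1) - t ^ 2 * f n) : ∀ n, S a b t n = f n
  | 0 => h₀.symm
  | 1 => h₁.symm
  | n + 2 => by
    rw [S, hrec, S_eq_of_recurrence h₀ h₁ hrec n, S_eq_of_recurrence h₀ h₁ hrec (n + 1)]

theorem S_add_add (a b c d t : ℝ) :
    ∀ n, S (a + d) (b + c) t (n + 1) = S a b t (n + 1) + (d * t + c) * S 2 1 t n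
  | 0 => by simp only [S]; ring
  | 1 => by simp only [S]; ring
  | n + 2 => by
    rw [S.eq_3 (a + d), S.eq_3 a, S.eq_3 2, S_add_add a b c d t n, S_add_add a b c d t (n + 1)]
    ring

/-- The Fibonacci polynomial `∑ₖ C(m−k, k) tᵏ`, indexed by `(k, m − k)` on the antidiagonal;
at `t = 1` it is `fib (m + 1)`. -/
noncomputable def fibPoly (t : ℝ) (m : ℕ) : ℝ :=
  ∑ p ∈ antidiagonal m, (p.2.choose p.1 : ℝ) * t ^ p.1

theorem fibPoly_add_two (t : ℝ) (m : ℕ) :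
    fibPoly t (m + 2) = fibPoly t (m + 1) + t * fibPoly t m := by
  simp only [fibPoly]
  rw [Nat.antidiagonal_succ_succ', Nat.antidiagonal_succ]
  simp only [sum_cons, sum_map, Function.Embedding.coe_prodMap, Prod.map,
    Function.Embedding.coeFn_mk, Nat.succ_eq_add_one, Function.Embedding.refl_apply,
    Nat.choose_succ_succ, Nat.cast_add, add_mul, sum_add_distrib, mul_sum, Nat.choose_zero_right,
    Nat.choose_zero_succ]
  ring_nf

theorem fibPoly_add_four (t : ℝ) (m : ℕ) :
    fibPoly t (m + 4) = (1 + 2 * t) * fibPoly t (m + 2) - t ^ 2 * fibPoly t m := by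
  rw [fibPoly_add_two t (m + 2), fibPoly_add_two t (m + 1), fibPoly_add_two t m]
  ring

theorem S_one_one_eq_fibPoly (t : ℝ) (n : ℕ) : S 1 1 t n = fibPoly t (2 * n) := by
  refine S_eq_of_recurrence (f := fun n => fibPoly t (2 * n)) ?_ ?_
    (fun n => fibPoly_add_four t (2 * n)) n
  · simp [fibPoly]
  · simp [fibPoly, Nat.antidiagonal_succ]
    ring

theorem S_two_one_eq_fibPoly (t : ℝ) (n : ℕ) : S 2 1 t n = fibPoly t (2 * n + 1) := by
  refine S_eq_of_recurrence (f := fun n => fibPoly t (2 * n + 1)) ?_ ?_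
    (fun n => fibPoly_add_four t (2 * n + 1)) n
  · simp [fibPoly, Nat.antidiagonal_succ]
  · simp [fibPoly, Nat.antidiagonal_succ]
    ring

theorem fibPoly_eq_sum_range (t : ℝ) {m N : ℕ} (hN : m < 2 * N) (hNm : N ≤ m + 1) :
    fibPoly t m = ∑ k ∈ range N, ((m - k).choose k : ℝ) * t ^ k := by
  rw [fibPoly, Nat.sum_antidiagonal_eq_sum_range_succ (fun i j => (j.choose i : ℝ) * t ^ i)]
  refine (sum_subset (range_subset_range.2 hNm) fun k hk hkN => ?_).symm
  simp only [mem_range] at hk hkN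
  rw [Nat.choose_eq_zero_of_lt (by omega), Nat.cast_zero, zero_mul]

theorem S_neg_one_fourth (a b : ℝ) (n : ℕ) :
    S a b (-1 / 4) n = (1 + (4 * b - a - 1) * n) / 4 ^ n := by
  refine S_eq_of_recurrence (f := fun n : ℕ => (1 + (4 * b - a - 1) * n) / 4 ^ n)
    (by simp) (by field_simp; ring) (fun n => ?_) n
  push_cast
  field_simp
  ring

/-- For `n ≥ 1`:
`Sₙ(1,s+1;t) = Sₙ(1,1;t) + s·Sₙ₋₁(2,1;t)
 = ∑_{k=0}^{n} C(2n−k,k) tᵏ + s·∑_{k=0}^{n-1} C(2n−1−k,k) tᵏ`,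
and `Sₙ(1,s+1;−1/4) = (4ns + 2n + 1)/4ⁿ`. -/
theorem S_one_s_plus_one (s t : ℝ) (n : ℕ) (hn : 1 ≤ n) :
    S 1 (s + 1) t n = S 1 1 t n + s * S 2 1 t (n - 1) ∧
    S 1 (s + 1) t n =
      (∑ k ∈ Finset.range (n + 1), (Nat.choose (2 * n - k) k : ℝ) * t ^ k)
        + s * ∑ k ∈ Finset.range n, (Nat.choose (2 * n - 1 - k) k : ℝ) * t ^ k ∧
    S 1 (s + 1) (-1 / 4) n = (4 * n * s + 2 * n + 1) / 4 ^ n := by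
  obtain ⟨m, rfl⟩ : ∃ m, n = m + 1 := ⟨n - 1, by omega⟩
  have split : S 1 (s + 1) t (m + 1) = S 1 1 t (m + 1) + s * S 2 1 t m := by
    simpa [add_comm s] using S_add_add 1 1 s 0 t m
  refine ⟨split, ?_, by rw [S_neg_one_fourth]; ring⟩
  rw [split, S_one_one_eq_fibPoly, S_two_one_eq_fibPoly, fibPoly_eq_sum_range t (N := m + 2)
    (by omega) (by omega), fibPoly_eq_sum_range t (N := m + 1) (by omega) (by omega),
    show 2 * (m + 1) - 1 = 2 * m + 1 by omega]
end

section
/- For every integer n ≥ 1 and every real t, the n×n real symmetric matrix A_n(t,t) with (i,j) entry min{i,j} + t + t·δ_{ij} (indices 1,…,n) is positive semidefinite if and only if t ≥ -1/(2 + 2·cos(π/(n+1))). -/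
open Real

/-- The `n×n` matrix `Aₙ(s,t)` with `(i,j)` entry `min{i,j} + s + t·δᵢⱼ`
(indices `1,…,n`). -/
def A (n : ℕ) (s t : ℝ) : Matrix (Fin n) (Fin n) ℝ :=
  Matrix.of fun i j =>
    ((min (i.1 + 1) (j.1 + 1) : ℕ) : ℝ) + s + if i = j then t else 0

/-!
In the tail-sum coordinates `y_k = x_k + ⋯ + x_n` (with `y_0 = y_{n+1} = 0`) the quadratic form of
`Aₙ(t,t)` is `∑ y_k² + t ∑ (y_{k+1} - y_k)²`, so `Aₙ(t,t)` is congruent to `I + tL` with `L` the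
Dirichlet Laplacian of the path on `n` vertices. The largest eigenvalue of `L` is `2 + 2 cos θ`,
`θ = π/(n+1)`, attained at `(-1)^k sin(kθ)`. The upper bound comes from the positive weights
`w_k = sin(kθ)`, which satisfy `w_{k-1} + w_{k+1} = 2 cos θ · w_k`: substituting `y = w z`, the sum
`∑ w_k w_{k+1} (z_k + z_{k+1})² ≥ 0` expands to `∑ y_k y_{k+1} ≥ -cos θ ∑ y_k²`.
-/

open Finset Matrix

section PinnedPath

variable {n : ℕ} {c : ℝ} {w : ℕ → ℝ}

lemma sum_weight_mul_sq_add_sq (hw0 : w 0 = 0) (hwn : w (n + 1) = 0)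
    (hrec : ∀ k, w k + w (k + 2) = 2 * c * w (k + 1)) (z : ℕ → ℝ) :
    ∑ k ∈ range (n + 1), w k * w (k + 1) * (z k ^ 2 + z (k + 1) ^ 2)
      = 2 * c * ∑ k ∈ range (n + 2), (w k * z k) ^ 2 := by
  have hnext : ∑ k ∈ range (n + 1), w k * w (k + 1) * z k ^ 2
      = ∑ k ∈ range (n + 2), w k * w (k + 1) * z k ^ 2 := by
    simp [sum_range_succ _ (n + 1), hwn]
  have hprev : ∑ k ∈ range (n + 1), w k * w (k + 1) * z (k + 1) ^ 2
      = ∑ k ∈ range (n + 2), w (k - 1) * w k * z k ^ 2 := by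
    simp [sum_range_succ' _ (n + 1), hw0]
  simp_rw [mul_add, sum_add_distrib, hnext, hprev, ← sum_add_distrib, mul_sum]
  refine sum_congr rfl fun k _ => ?_
  rcases k with _ | k
  · simp [hw0]
  · simp only [add_tsub_cancel_right]
    linear_combination w (k + 1) * z (k + 1) ^ 2 * hrec k

lemma neg_mul_sum_sq_le_sum_mul_succ (hw0 : w 0 = 0) (hwn : w (n + 1) = 0)
    (hrec : ∀ k, w k + w (k + 2) = 2 * c * w (k + 1)) (hpos : ∀ k, 0 < k → k ≤ n → 0 < w k)
    {y : ℕ → ℝ} (hy0 : y 0 = 0) (hyn : y (n + 1) = 0) :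
    -c * ∑ k ∈ range (n + 2), y k ^ 2 ≤ ∑ k ∈ range (n + 1), y k * y (k + 1) := by
  have hw_nonneg : ∀ k < n + 2, 0 ≤ w k := by
    intro k hk
    rcases Nat.eq_zero_or_pos k with rfl | hk0
    · exact hw0.ge
    rcases Nat.lt_succ_iff_lt_or_eq.mp hk with hkn | rfl
    · exact (hpos k hk0 (by omega)).le
    · exact hwn.ge
  set z : ℕ → ℝ := fun k => y k / w k
  have hwz : ∀ k < n + 2, w k * z k = y k := by
    intro k hk
    rcases Nat.eq_zero_or_pos k with rfl | hk0
    · simp [hw0, hy0]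
    rcases Nat.lt_succ_iff_lt_or_eq.mp hk with hkn | rfl
    · exact mul_div_cancel₀ _ (hpos k hk0 (by omega)).ne'
    · simp [hwn, hyn]
  have hsq : 0 ≤ ∑ k ∈ range (n + 1), w k * w (k + 1) * (z k + z (k + 1)) ^ 2 := by
    refine sum_nonneg fun k hk => ?_
    have := hw_nonneg k (by simp at hk; omega)
    have := hw_nonneg (k + 1) (by simp at hk; omega)
    positivity
  have hexpand : ∑ k ∈ range (n + 1), w k * w (k + 1) * (z k + z (k + 1)) ^ 2
      = ∑ k ∈ range (n + 1), w k * w (k + 1) * (z k ^ 2 + z (k + 1) ^ 2)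
        + 2 * ∑ k ∈ range (n + 1), y k * y (k + 1) := by
    rw [mul_sum, ← sum_add_distrib]
    refine sum_congr rfl fun k hk => ?_
    rw [← hwz k (by simp at hk; omega), ← hwz (k + 1) (by simp at hk; omega)]
    ring
  have hsum : ∑ k ∈ range (n + 2), (w k * z k) ^ 2 = ∑ k ∈ range (n + 2), y k ^ 2 :=
    sum_congr rfl fun k hk => by rw [hwz k (mem_range.mp hk)]
  rw [hexpand, sum_weight_mul_sq_add_sq hw0 hwn hrec, hsum] at hsq
  linarith

lemma sum_sub_sq_eq {y : ℕ → ℝ} (hy0 : y 0 = 0) (hyn : y (n + 1) = 0) :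
    ∑ k ∈ range (n + 1), (y (k + 1) - y k) ^ 2
      = 2 * ∑ k ∈ range (n + 2), y k ^ 2 - 2 * ∑ k ∈ range (n + 1), y k * y (k + 1) := by
  have hnext : ∑ k ∈ range (n + 1), y (k + 1) ^ 2 = ∑ k ∈ range (n + 2), y k ^ 2 := by
    simp [sum_range_succ' _ (n + 1), hy0]
  have hcur : ∑ k ∈ range (n + 1), y k ^ 2 = ∑ k ∈ range (n + 2), y k ^ 2 := by
    simp [sum_range_succ _ (n + 1), hyn]
  have : ∀ k, (y (k + 1) - y k) ^ 2 = y (k + 1) ^ 2 + y k ^ 2 - 2 * (y k * y (k + 1)) :=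
    fun k => by ring
  simp_rw [this, sum_sub_distrib, sum_add_distrib, hnext, hcur, ← mul_sum]
  ring

lemma sum_sub_sq_le (hw0 : w 0 = 0) (hwn : w (n + 1) = 0)
    (hrec : ∀ k, w k + w (k + 2) = 2 * c * w (k + 1)) (hpos : ∀ k, 0 < k → k ≤ n → 0 < w k)
    {y : ℕ → ℝ} (hy0 : y 0 = 0) (hyn : y (n + 1) = 0) :
    ∑ k ∈ range (n + 1), (y (k + 1) - y k) ^ 2 ≤ (2 + 2 * c) * ∑ k ∈ range (n + 2), y k ^ 2 := by
  rw [sum_sub_sq_eq hy0 hyn]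
  linarith [neg_mul_sum_sq_le_sum_mul_succ hw0 hwn hrec hpos hy0 hyn]

lemma sum_sub_sq_alternating (hw0 : w 0 = 0) (hwn : w (n + 1) = 0)
    (hrec : ∀ k, w k + w (k + 2) = 2 * c * w (k + 1)) :
    ∑ k ∈ range (n + 1), ((-1) ^ (k + 1) * w (k + 1) - (-1) ^ k * w k) ^ 2
      = (2 + 2 * c) * ∑ k ∈ range (n + 2), ((-1) ^ k * w k) ^ 2 := by
  have hsign : ∀ k, ((-1 : ℝ) ^ k) ^ 2 = 1 := fun k => by
    rw [← pow_mul, mul_comm, pow_mul, neg_one_sq, one_pow]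
  have hsq : ∀ k, ((-1 : ℝ) ^ k * w k) ^ 2 = w k ^ 2 := fun k => by
    rw [mul_pow, hsign, one_mul]
  have hmul : ∀ k, (-1 : ℝ) ^ k * w k * ((-1) ^ (k + 1) * w (k + 1)) = -(w k * w (k + 1)) :=
    fun k => by
      calc _ = -(((-1 : ℝ) ^ k) ^ 2 * (w k * w (k + 1))) := by ring
        _ = _ := by rw [hsign, one_mul]
  have h := sum_weight_mul_sq_add_sq hw0 hwn hrec fun _ => 1
  have he := sum_sub_sq_eq (n := n) (y := fun k => (-1 : ℝ) ^ k * w k) (by simp [hw0]) (by simp [hwn])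
  simp only [one_pow, mul_one, ← sum_mul] at h
  simp only [hsq, hmul, sum_neg_distrib] at he ⊢
  rw [he]
  linear_combination h

end PinnedPath

lemma sin_nat_mul_add_sin (θ : ℝ) (k : ℕ) :
    sin (k * θ) + sin ((k + 2 : ℕ) * θ) = 2 * cos θ * sin ((k + 1 : ℕ) * θ) := by
  have h₁ : (k : ℝ) * θ = (k + 1 : ℕ) * θ - θ := by push_cast; ring
  have h₂ : ((k + 2 : ℕ) : ℝ) * θ = (k + 1 : ℕ) * θ + θ := by push_cast; ring
  rw [h₁, h₂, sin_sub, sin_add]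
  ring

lemma sin_nat_mul_pi_div_pos {n k : ℕ} (hk : 0 < k) (hkn : k ≤ n) :
    0 < sin (k * (π / (n + 1))) := by
  apply sin_pos_of_pos_of_lt_pi (by positivity)
  rw [← mul_div_assoc, div_lt_iff₀ (by positivity), mul_comm]
  gcongr
  exact_mod_cast Nat.lt_succ_of_le hkn

lemma sin_succ_mul_pi_div (n : ℕ) : sin ((n + 1 : ℕ) * (π / (n + 1))) = 0 := by
  rw [Nat.cast_succ, mul_div_cancel₀ _ (by positivity), sin_pi]

lemma A_isHermitian (n : ℕ) (s t : ℝ) : (A n s t).IsHermitian := by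
  ext i j
  simp only [A, conjTranspose_apply, of_apply, star_trivial, min_comm, eq_comm]

/-- With `Fin n` indexed from `0`, `tailSums x k = x_{k-1} + ⋯ + x_{n-1}` for `k ≥ 1`. -/
def tailSums {n : ℕ} (x : Fin n → ℝ) : ℕ → ℝ
  | 0 => 0
  | k + 1 => ∑ i : Fin n, if k ≤ i.1 then x i else 0

section TailSums

variable {n : ℕ} (x : Fin n → ℝ)

lemma tailSums_succ_self : tailSums x (n + 1) = 0 :=
  sum_eq_zero fun i _ => if_neg (not_le.mpr i.2)

lemma tailSums_succ_sub_succ (i : Fin n) : tailSums x (i + 1) - tailSums x (i + 2) = x i := by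
  simp only [tailSums, ← sum_sub_distrib]
  rw [Fintype.sum_eq_single i]
  · simp
  · intro j hj
    have : (i : ℕ) ≠ j := fun h => hj (Fin.ext h).symm
    split_ifs <;> first | omega | simp

lemma sum_sub_sq_tailSums :
    ∑ k ∈ range (n + 1), (tailSums x (k + 1) - tailSums x k) ^ 2
      = (∑ i, x i) ^ 2 + ∑ i, x i ^ 2 := by
  rw [sum_range_succ', add_comm,
    ← Fin.sum_univ_eq_sum_range fun k => (tailSums x (k + 2) - tailSums x (k + 1)) ^ 2]
  congr 1
  · simp [tailSums]
  · refine sum_congr rfl fun i _ => ?_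
    rw [← tailSums_succ_sub_succ x i]
    ring

lemma exists_tailSums_eq {v : ℕ → ℝ} (hv0 : v 0 = 0) (hvn : v (n + 1) = 0) :
    ∃ x : Fin n → ℝ, ∀ k < n + 2, tailSums x k = v k := by
  refine ⟨fun i => v (i + 1) - v (i + 2), fun k hk => ?_⟩
  rcases k with _ | k
  · exact hv0.symm
  have hfilter : (range n).filter (k ≤ ·) = Ico k n := by ext; simp; omega
  rw [tailSums, Fin.sum_univ_eq_sum_range (fun i => if k ≤ i then v (i + 1) - v (i + 2) else 0),
    ← sum_filter, hfilter]
  have := sum_Ico_sub (fun i => v (i + 1)) (show k ≤ n by omega)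
  simp only [hvn] at this
  calc _ = -∑ i ∈ Ico k n, (v (i + 1 + 1) - v (i + 1)) := by
        rw [← sum_neg_distrib]; exact sum_congr rfl fun _ _ => by ring
    _ = v (k + 1) := by rw [this]; ring

lemma natCast_min_succ_eq_sum (i j : Fin n) :
    ((min (i.1 + 1) (j.1 + 1) : ℕ) : ℝ)
      = ∑ k ∈ range n, (if k ≤ i.1 then 1 else 0) * (if k ≤ j.1 then 1 else 0) := by
  simp_rw [ite_zero_mul_ite_zero, mul_one, sum_boole]
  congr
  rw [← card_range (min _ _)]
  congr 1
  ext k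
  simp
  omega

lemma sum_sq_tailSums :
    ∑ k ∈ range (n + 2), tailSums x k ^ 2
      = ∑ i, ∑ j, x i * ((min (i.1 + 1) (j.1 + 1) : ℕ) : ℝ) * x j := by
  rw [sum_range_succ, sum_range_succ', tailSums_succ_self]
  simp only [tailSums, natCast_min_succ_eq_sum, sq, mul_zero, add_zero, mul_sum, sum_mul]
  rw [sum_comm]
  refine sum_congr rfl fun i _ => ?_
  rw [sum_comm]
  refine sum_congr rfl fun j _ => sum_congr rfl fun k _ => ?_
  split_ifs <;> ring

lemma dotProduct_A_mulVec (s t : ℝ) :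
    x ⬝ᵥ (A n s t *ᵥ x) = ∑ k ∈ range (n + 2), tailSums x k ^ 2 + s * (∑ i, x i) ^ 2
      + t * ∑ i, x i ^ 2 := by
  rw [sum_sq_tailSums]
  simp only [dotProduct, mulVec, A, of_apply, add_mul, ite_mul, zero_mul, sum_add_distrib,
    mul_add, sum_ite_eq, mem_univ, if_true]
  rw [sq, sum_mul_sum, mul_sum, mul_sum]
  congr 1; congr 1
  all_goals refine sum_congr rfl fun i _ => ?_
  · simp only [mul_sum, mul_assoc]
  · simp only [mul_sum]; exact sum_congr rfl fun j _ => by ring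
  · ring

end TailSums

lemma posSemidef_A_self_iff (n : ℕ) (t : ℝ) :
    (A n t t).PosSemidef ↔ ∀ y : ℕ → ℝ, y 0 = 0 → y (n + 1) = 0 →
      0 ≤ ∑ k ∈ range (n + 2), y k ^ 2 + t * ∑ k ∈ range (n + 1), (y (k + 1) - y k) ^ 2 := by
  have hform : ∀ x : Fin n → ℝ, x ⬝ᵥ (A n t t *ᵥ x) = ∑ k ∈ range (n + 2), tailSums x k ^ 2
      + t * ∑ k ∈ range (n + 1), (tailSums x (k + 1) - tailSums x k) ^ 2 := fun x => by
    rw [dotProduct_A_mulVec, sum_sub_sq_tailSums]; ring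
  rw [posSemidef_iff_dotProduct_mulVec, and_iff_right (A_isHermitian n t t)]
  simp only [star_trivial, hform]
  constructor
  · intro h y hy0 hyn
    obtain ⟨x, hx⟩ := exists_tailSums_eq hy0 hyn
    have hsq : ∑ k ∈ range (n + 2), tailSums x k ^ 2 = ∑ k ∈ range (n + 2), y k ^ 2 :=
      sum_congr rfl fun k hk => by rw [hx k (mem_range.mp hk)]
    have hdiff : ∑ k ∈ range (n + 1), (tailSums x (k + 1) - tailSums x k) ^ 2
        = ∑ k ∈ range (n + 1), (y (k + 1) - y k) ^ 2 :=
      sum_congr rfl fun k hk => by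
        have := mem_range.mp hk
        rw [hx k (by omega), hx (k + 1) (by omega)]
    simpa only [hsq, hdiff] using h x
  · exact fun h x => h _ rfl (tailSums_succ_self x)

/-- `Aₙ(t,t)` is positive semidefinite iff `t ≥ -1/(2 + 2 cos(π/(n+1)))`. -/
theorem A_t_t_posSemidef_iff (n : ℕ) (hn : 1 ≤ n) (t : ℝ) :
    (A n t t).PosSemidef ↔ t ≥ -1 / (2 + 2 * Real.cos (π / (n + 1))) := by
  set θ := π / (n + 1)
  set w : ℕ → ℝ := fun k => sin (k * θ)
  have hw0 : w 0 = 0 := by simp [w]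
  have hwn : w (n + 1) = 0 := sin_succ_mul_pi_div n
  have hrec : ∀ k, w k + w (k + 2) = 2 * cos θ * w (k + 1) := sin_nat_mul_add_sin θ
  have hpos : ∀ k, 0 < k → k ≤ n → 0 < w k := fun k => sin_nat_mul_pi_div_pos
  have hw1 : 0 < w 1 := hpos 1 one_pos hn
  have hc : 0 < 2 + 2 * cos θ := by
    nlinarith [sin_sq_add_cos_sq θ, neg_one_le_cos θ, cos_le_one θ, show sin θ = w 1 by simp [w]]
  rw [ge_iff_le, div_le_iff₀ hc, posSemidef_A_self_iff]
  constructor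
  · intro h
    have hv := h (fun k => (-1) ^ k * w k) (by simp [hw0]) (by simp [hwn])
    rw [sum_sub_sq_alternating hw0 hwn hrec] at hv
    have hS : 0 < ∑ k ∈ range (n + 2), ((-1) ^ k * w k) ^ 2 :=
      sum_pos' (fun k _ => sq_nonneg _) ⟨1, by simp, by rw [pow_one, neg_one_mul, neg_sq]; exact pow_pos hw1 2⟩
    nlinarith
  · intro ht y hy0 hyn
    have hE := sum_sub_sq_le hw0 hwn hrec hpos hy0 hyn
    have hS0 : 0 ≤ ∑ k ∈ range (n + 2), y k ^ 2 := sum_nonneg fun _ _ => sq_nonneg _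
    rcases le_or_gt 0 t with ht0 | ht0
    · positivity
    · nlinarith [mul_le_mul_of_nonpos_left hE ht0.le]
end
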